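/- arXiv:2002.05859 — 3 statements merged into one kernel-verified Lean document; each statement's English description precedes it below -/
import Mathlib

section
/- Let V be an n-dimensional vector space over 𝔽_q with m ≥ 2, and let ℱ be a nonempty intersecting family of m-dimensional subspaces of V with covering number τ(ℱ) = m. If |ℱ_T| ≤ [m−1 over 1]_q for every (m−1)-dimensional subspace T of V, then |ℱ| ≤ [m−1 over 1]_q · [m over 1]_q^{m−1}. -/
open Module

/-- The Gaussian binomial coefficient `[n over m]_q`, as a rational number. -/
def gaussBinom (q n m : ℕ) : ℚ :=
  ∏ i ∈ Finset.range m, ((q : ℚ) ^ (n - i) - 1) / ((q : ℚ) ^ (m - i) - 1)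

/-- A family of subspaces is intersecting if any two of its members have intersection
of dimension at least 1. -/
def IsIntersectingFamily {F V : Type*} [Field F] [AddCommGroup V] [Module F V]
    (𝒜 : Set (Submodule F V)) : Prop :=
  ∀ A ∈ 𝒜, ∀ B ∈ 𝒜, 1 ≤ finrank F ↥(A ⊓ B)

/-- The covering number of a family of subspaces: the minimum dimension of a subspace
intersecting every member of the family. -/
noncomputable def coveringNumber {F V : Type*} [Field F] [AddCommGroup V] [Module F V]
    (𝒜 : Set (Submodule F V)) : ℕ :=
  sInf { d : ℕ | ∃ W : Submodule F V, finrank F ↥W = d ∧ ∀ A ∈ 𝒜, 1 ≤ finrank F ↥(W ⊓ A) }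

/-!
A subspace `A` of dimension less than `τ(ℱ) = m` misses some `G₀ ∈ ℱ`. Every member of `ℱ_A`
meets `G₀`, so `ℱ_A` is covered by the families `ℱ_{A ⊔ x}` with `x` one of the `[m over 1]_q`
lines of `G₀`, and each `A ⊔ x` has dimension `dim A + 1`. Branching `m - 1` times from `A = 0`
reaches `(m - 1)`-dimensional subspaces, where `|ℱ_T| ≤ [m - 1 over 1]_q` by hypothesis.
-/

section Lines

variable {F V : Type*} [Field F] [AddCommGroup V] [Module F V]

def lines (W : Submodule F V) : Set (Submodule F V) :=
  {x | x ≤ W ∧ finrank F x = 1}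

def familyContaining (ℱ : Set (Submodule F V)) (A : Submodule F V) : Set (Submodule F V) :=
  {G | G ∈ ℱ ∧ A ≤ G}

@[simp]
lemma familyContaining_bot (ℱ : Set (Submodule F V)) : familyContaining ℱ ⊥ = ℱ := by
  simp [familyContaining]

noncomputable def linesEquivProjectivization (W : Submodule F V) :
    lines W ≃ Projectivization F W :=
  ((Equiv.subtypeSubtypeEquivSubtypeInter (· ≤ W) (fun x => finrank F x = 1)).symm.trans
    ((Submodule.MapSubtype.orderIso W).toEquiv.subtypeEquiv fun x => by
      show _ ↔ finrank F (x.map W.subtype) = 1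
      rw [Submodule.finrank_map_subtype_eq]).symm).trans
    (Projectivization.equivSubmodule F W).symm

lemma gaussBinom_one_eq_geom_sum {q : ℕ} (hq : q ≠ 1) (k : ℕ) :
    gaussBinom q k 1 = ∑ i ∈ Finset.range k, (q : ℚ) ^ i := by
  rw [geom_sum_eq (by exact_mod_cast hq)]
  simp [gaussBinom]

lemma ncard_lines [Finite F] (W : Submodule F V) :
    ((lines W).ncard : ℚ) = gaussBinom (Nat.card F) (finrank F W) 1 := by
  rw [gaussBinom_one_eq_geom_sum Finite.one_lt_card.ne', ← Nat.card_coe_set_eq,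
    Nat.card_congr (linesEquivProjectivization W), Projectivization.card_of_finrank F W rfl]
  push_cast
  rfl

lemma subset_biUnion_familyContaining_sup_lines {ℱ : Set (Submodule F V)}
    (hint : IsIntersectingFamily ℱ) {G₀ : Submodule F V} (hG₀ : G₀ ∈ ℱ) (A : Submodule F V) :
    familyContaining ℱ A ⊆ ⋃ x ∈ lines G₀, familyContaining ℱ (A ⊔ x) := by
  rintro G ⟨hG, hAG⟩
  have hne : G₀ ⊓ G ≠ ⊥ := by
    intro h
    have := hint G₀ hG₀ G hG
    rw [h, finrank_bot] at this
    omega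
  obtain ⟨v, ⟨hvG₀, hvG⟩, hv⟩ := Submodule.exists_mem_ne_zero_of_ne_bot hne
  refine Set.mem_biUnion (x := Submodule.span F {v}) ⟨?_, finrank_span_singleton hv⟩ ⟨hG, ?_⟩
  · exact (Submodule.span_singleton_le_iff_mem v G₀).2 hvG₀
  · exact sup_le hAG ((Submodule.span_singleton_le_iff_mem v G).2 hvG)

end Lines

section Covering

variable {F V : Type*} [Field F] [AddCommGroup V] [Module F V] [FiniteDimensional F V]
  {ℱ : Set (Submodule F V)}

lemma exists_disjoint_of_finrank_lt_coveringNumber {A : Submodule F V}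
    (hA : finrank F A < coveringNumber ℱ) : ∃ G ∈ ℱ, Disjoint A G := by
  by_contra! h
  refine hA.not_ge (Nat.sInf_le ⟨A, rfl, fun G hG => ?_⟩)
  exact Submodule.one_le_finrank_iff.2 (disjoint_iff.not.1 (h G hG))

lemma ncard_familyContaining_le_of_disjoint [Finite F] (hint : IsIntersectingFamily ℱ)
    {G₀ A : Submodule F V} (hG₀ : G₀ ∈ ℱ) (hA : Disjoint A G₀) {b : ℚ}
    (hb : ∀ T : Submodule F V, finrank F T = finrank F A + 1 →
      ((familyContaining ℱ T).ncard : ℚ) ≤ b) :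
    ((familyContaining ℱ A).ncard : ℚ) ≤ gaussBinom (Nat.card F) (finrank F G₀) 1 * b := by
  have : Finite V := Module.finite_of_finite F
  have hL : (lines G₀).Finite := Set.toFinite _
  have hsup : ∀ x ∈ hL.toFinset, finrank F ↥(A ⊔ x) = finrank F A + 1 := by
    intro x hx
    rw [Set.Finite.mem_toFinset] at hx
    have := Submodule.finrank_sup_add_finrank_inf_eq A x
    rwa [(hA.mono_right hx.1).eq_bot, finrank_bot, add_zero, hx.2] at this
  calc ((familyContaining ℱ A).ncard : ℚ)
      ≤ ((⋃ x ∈ hL.toFinset, familyContaining ℱ (A ⊔ x)).ncard : ℚ) := by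
        gcongr
        · exact Set.toFinite _
        · simpa using subset_biUnion_familyContaining_sup_lines hint hG₀ A
    _ ≤ ∑ x ∈ hL.toFinset, ((familyContaining ℱ (A ⊔ x)).ncard : ℚ) := by
        exact_mod_cast Finset.set_ncard_biUnion_le _ _
    _ ≤ ∑ x ∈ hL.toFinset, b := Finset.sum_le_sum fun x hx => hb _ (hsup x hx)
    _ = gaussBinom (Nat.card F) (finrank F G₀) 1 * b := by
        rw [Finset.sum_const, nsmul_eq_mul, ← Set.ncard_eq_toFinset_card _ hL, ncard_lines]

theorem ncard_familyContaining_le [Finite F] {m : ℕ} (hdim : ∀ G ∈ ℱ, finrank F G = m)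
    (hint : IsIntersectingFamily ℱ) (hτ : coveringNumber ℱ = m)
    (hsmall : ∀ T : Submodule F V, finrank F T = m - 1 →
      ((familyContaining ℱ T).ncard : ℚ) ≤ gaussBinom (Nat.card F) (m - 1) 1)
    (k : ℕ) (A : Submodule F V) (hA : finrank F A + k = m - 1) :
    ((familyContaining ℱ A).ncard : ℚ)
      ≤ gaussBinom (Nat.card F) (m - 1) 1 * gaussBinom (Nat.card F) m 1 ^ k := by
  induction k generalizing A with
  | zero => simpa using hsmall A hA
  | succ k ih =>
    obtain ⟨G₀, hG₀, hdisj⟩ :=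
      exists_disjoint_of_finrank_lt_coveringNumber (by omega : finrank F A < coveringNumber ℱ)
    have hstep := ncard_familyContaining_le_of_disjoint hint hG₀ hdisj fun T hT => ih T (by omega)
    rw [hdim G₀ hG₀] at hstep
    exact hstep.trans_eq (by ring)

end Covering

theorem stmt7_general {F V : Type*} [Field F] [Fintype F] [AddCommGroup V] [Module F V]
    [FiniteDimensional F V] {q m : ℕ} (hq : Fintype.card F = q)
    (ℱ : Set (Submodule F V))
    (hdim : ∀ A ∈ ℱ, finrank F ↥A = m)
    (hint : IsIntersectingFamily ℱ) (hτ : coveringNumber ℱ = m)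
    (hsmall : ∀ T : Submodule F V, finrank F ↥T = m - 1 →
      ({G | G ∈ ℱ ∧ T ≤ G}.ncard : ℚ) ≤ gaussBinom q (m - 1) 1) :
    (ℱ.ncard : ℚ) ≤ gaussBinom q (m - 1) 1 * gaussBinom q m 1 ^ (m - 1) := by
  rw [← hq, Fintype.card_eq_nat_card] at hsmall ⊢
  simpa using ncard_familyContaining_le hdim hint hτ hsmall (m - 1) ⊥ (by simp)

theorem stmt7 {F V : Type*} [Field F] [Fintype F] [AddCommGroup V] [Module F V]
    [FiniteDimensional F V] {q m n : ℕ} (hq : Fintype.card F = q)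
    (hm : 2 ≤ m) (hV : finrank F V = n)
    (ℱ : Set (Submodule F V)) (hne : ℱ.Nonempty)
    (hdim : ∀ A ∈ ℱ, finrank F ↥A = m)
    (hint : IsIntersectingFamily ℱ) (hτ : coveringNumber ℱ = m)
    (hsmall : ∀ T : Submodule F V, finrank F ↥T = m - 1 →
      ({G | G ∈ ℱ ∧ T ≤ G}.ncard : ℚ) ≤ gaussBinom q (m - 1) 1) :
    (ℱ.ncard : ℚ) ≤ gaussBinom q (m - 1) 1 * gaussBinom q m 1 ^ (m - 1) :=
  stmt7_general hq ℱ hdim hint hτ hsmall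
end

section
/- Let V be an n-dimensional vector space over 𝔽_q with m ≥ 2, and let ℱ be an intersecting family of m-dimensional subspaces of V with covering number τ(ℱ) = m. Suppose T is an (m−1)-dimensional subspace of V with |ℱ_T| > [m−1 over 1]_q, and set Y = Σ_{F ∈ ℱ_T} F. Then dim(Y) = 2m − 1, and every A ∈ ℱ with A ∩ T = 0 satisfies A ⊆ Y (indeed Y = T + A for every such A). -/
open Module

/-!
Since `τ(ℱ) = m > dim T`, some `A ∈ ℱ` misses `T`. For any such `A`, each `G ∈ ℱ_T` contains `T`
as a hyperplane and meets `A`, so `G ∩ A` is a line and `G = T + (G ∩ A)`. Hence `G ↦ G ∩ A` is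
injective, `Y ≤ T + A`, and the more than `[m-1 over 1]_q` lines `G ∩ A` all lie in `Y ∩ A`; a
subspace of `A` with that many lines is `A` itself. So `Y = T ⊕ A`, of dimension `2m - 1`.
-/

open scoped LinearAlgebra.Projectivization

section Lattice

variable {α : Type*} {T A : α} {s : Set α}

theorem injOn_inf_of_sup_inf_eq [Lattice α] (h : ∀ G ∈ s, T ⊔ G ⊓ A = G) :
    Set.InjOn (· ⊓ A) s := by
  intro G hG G' hG' hGG'
  rw [← h G hG, ← h G' hG']
  exact congrArg (T ⊔ ·) hGG'

theorem sSup_le_sup_of_sup_inf_eq [CompleteLattice α] (h : ∀ G ∈ s, T ⊔ G ⊓ A = G) :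
    sSup s ≤ T ⊔ A :=
  sSup_le fun G hG => h G hG ▸ sup_le_sup_left inf_le_right T

end Lattice

namespace Submodule

variable {K V : Type*} [Field K] [AddCommGroup V] [Module K V]

theorem finrank_sup_of_disjoint [FiniteDimensional K V] {s t : Submodule K V}
    (h : Disjoint s t) : finrank K ↥(s ⊔ t) = finrank K s + finrank K t := by
  rw [← finrank_sup_add_finrank_inf_eq, h.eq_bot, finrank_bot, add_zero]

section Hyperplane

variable [FiniteDimensional K V] {T G A : Submodule K V}

theorem finrank_inf_eq_one_of_disjoint (hTG : T ≤ G) (hG : finrank K G ≤ finrank K T + 1)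
    (hTA : Disjoint T A) (hGA : 1 ≤ finrank K ↥(G ⊓ A)) : finrank K ↥(G ⊓ A) = 1 := by
  have hle : finrank K ↥(T ⊔ G ⊓ A) ≤ finrank K G := finrank_mono (sup_le hTG inf_le_left)
  rw [finrank_sup_of_disjoint (hTA.mono_right inf_le_right)] at hle
  omega

theorem sup_inf_eq_of_disjoint (hTG : T ≤ G) (hG : finrank K G ≤ finrank K T + 1)
    (hTA : Disjoint T A) (hGA : 1 ≤ finrank K ↥(G ⊓ A)) : T ⊔ G ⊓ A = G := by
  refine eq_of_le_of_finrank_le (sup_le hTG inf_le_left) ?_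
  rw [finrank_sup_of_disjoint (hTA.mono_right inf_le_right),
    finrank_inf_eq_one_of_disjoint hTG hG hTA hGA]
  exact hG

end Hyperplane

theorem ncard_lines_mul_le [Finite K] [FiniteDimensional K V] (W : Submodule K V) :
    {L : Submodule K V | finrank K L = 1 ∧ L ≤ W}.ncard * (Nat.card K - 1) ≤
      Nat.card K ^ finrank K W - 1 := by
  have : Finite W := Module.finite_of_finite K
  have hrange : {L : Submodule K V | finrank K L = 1 ∧ L ≤ W} ⊆
      Set.range fun p : ℙ K W => p.submodule.map W.subtype := by
    rintro L ⟨hL, hLW⟩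
    have hL' : finrank K (L.comap W.subtype) = 1 :=
      (comapSubtypeEquivOfLe hLW).finrank_eq.trans hL
    refine ⟨Projectivization.mk'' _ hL', ?_⟩
    dsimp only
    rw [Projectivization.submodule_mk'', map_comap_subtype, inf_eq_right.mpr hLW]
  calc _ ≤ Nat.card (ℙ K W) * (Nat.card K - 1) := by
        gcongr
        exact (Set.ncard_le_ncard hrange).trans (Finite.card_range_le _)
    _ = Nat.card K ^ finrank K W - 1 := by
        rw [← Projectivization.card, Module.natCard_eq_pow_finrank (K := K) (V := W)]

theorem le_sSup_of_injOn_inf [Finite K] [FiniteDimensional K V] {A : Submodule K V}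
    {𝒢 : Set (Submodule K V)} (hline : ∀ G ∈ 𝒢, finrank K ↥(G ⊓ A) = 1)
    (hinj : Set.InjOn (· ⊓ A) 𝒢)
    (hcount : Nat.card K ^ (finrank K A - 1) - 1 < 𝒢.ncard * (Nat.card K - 1)) :
    A ≤ sSup 𝒢 := by
  have : Finite V := Module.finite_of_finite K
  set W := sSup 𝒢 ⊓ A
  have hlines : 𝒢.ncard ≤ {L : Submodule K V | finrank K L = 1 ∧ L ≤ W}.ncard :=
    Set.ncard_le_ncard_of_injOn (· ⊓ A)
      (fun G hG => ⟨hline G hG, inf_le_inf_right A (le_sSup hG)⟩) hinj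
  have hW : finrank K A ≤ finrank K W := by
    by_contra! hlt
    have hpow : Nat.card K ^ finrank K W ≤ Nat.card K ^ (finrank K A - 1) :=
      Nat.pow_le_pow_right Nat.card_pos (by omega)
    have := (Nat.mul_le_mul_right (Nat.card K - 1) hlines).trans (ncard_lines_mul_le W)
    omega
  exact (eq_of_le_of_finrank_le inf_le_right hW) ▸ inf_le_left

section Pencil

variable [Finite K] [FiniteDimensional K V] {T A : Submodule K V} {𝒢 : Set (Submodule K V)}

theorem le_sSup_of_disjoint (hT : ∀ G ∈ 𝒢, T ≤ G)
    (hdim : ∀ G ∈ 𝒢, finrank K G ≤ finrank K T + 1) (hA : ∀ G ∈ 𝒢, 1 ≤ finrank K ↥(G ⊓ A))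
    (hTA : Disjoint T A)
    (hcount : Nat.card K ^ (finrank K A - 1) - 1 < 𝒢.ncard * (Nat.card K - 1)) :
    A ≤ sSup 𝒢 :=
  le_sSup_of_injOn_inf
    (fun G hG => finrank_inf_eq_one_of_disjoint (hT G hG) (hdim G hG) hTA (hA G hG))
    (injOn_inf_of_sup_inf_eq fun G hG =>
      sup_inf_eq_of_disjoint (hT G hG) (hdim G hG) hTA (hA G hG))
    hcount

theorem sSup_eq_sup_of_disjoint (hT : ∀ G ∈ 𝒢, T ≤ G)
    (hdim : ∀ G ∈ 𝒢, finrank K G ≤ finrank K T + 1) (hA : ∀ G ∈ 𝒢, 1 ≤ finrank K ↥(G ⊓ A))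
    (hTA : Disjoint T A)
    (hcount : Nat.card K ^ (finrank K A - 1) - 1 < 𝒢.ncard * (Nat.card K - 1)) :
    sSup 𝒢 = T ⊔ A := by
  obtain ⟨G, hG⟩ : 𝒢.Nonempty :=
    Set.nonempty_of_ncard_ne_zero fun h => by simp [h] at hcount
  refine le_antisymm (sSup_le_sup_of_sup_inf_eq fun G hG => ?_)
    (sup_le ((hT G hG).trans (le_sSup hG)) (le_sSup_of_disjoint hT hdim hA hTA hcount))
  exact sup_inf_eq_of_disjoint (hT G hG) (hdim G hG) hTA (hA G hG)

end Pencil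

end Submodule

theorem coveringNumber_le {K V : Type*} [Field K] [AddCommGroup V] [Module K V]
    {𝒜 : Set (Submodule K V)} {W : Submodule K V} (hW : ∀ A ∈ 𝒜, 1 ≤ finrank K ↥(W ⊓ A)) :
    coveringNumber 𝒜 ≤ finrank K W :=
  Nat.sInf_le ⟨W, rfl, hW⟩

theorem exists_disjoint_of_finrank_lt_coveringNumber_s8 {K V : Type*} [Field K] [AddCommGroup V]
    [Module K V] [FiniteDimensional K V] {𝒜 : Set (Submodule K V)} {T : Submodule K V}
    (hT : finrank K T < coveringNumber 𝒜) : ∃ A ∈ 𝒜, Disjoint T A := by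
  by_contra! h
  refine hT.not_ge (coveringNumber_le fun A hA => Nat.one_le_iff_ne_zero.mpr fun h0 => ?_)
  exact h A hA (disjoint_iff.mpr (Submodule.finrank_eq_zero.mp h0))

theorem gaussBinom_one (q k : ℕ) : gaussBinom q k 1 = ((q : ℚ) ^ k - 1) / (q - 1) := by
  simp [gaussBinom]

theorem pow_sub_one_lt_mul_of_gaussBinom_one_lt {q k N : ℕ} (hq : 1 < q)
    (h : gaussBinom q k 1 < N) : q ^ k - 1 < N * (q - 1) := by
  have hq' : (1 : ℚ) < q := by exact_mod_cast hq
  rw [gaussBinom_one, div_lt_iff₀ (by linarith)] at h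
  have hk : 1 ≤ q ^ k := Nat.one_le_pow _ _ (by omega)
  exact_mod_cast (show ((q ^ k - 1 : ℕ) : ℚ) < ((N * (q - 1) : ℕ) : ℚ) by
    push_cast [Nat.cast_sub hk, Nat.cast_sub hq.le]; exact h)

theorem stmt8_general {F V : Type*} [Field F] [Fintype F] [AddCommGroup V] [Module F V]
    [FiniteDimensional F V] {q m : ℕ} (hq : Fintype.card F = q)
    (hm : 2 ≤ m)
    (ℱ : Set (Submodule F V)) (hdim : ∀ A ∈ ℱ, finrank F ↥A = m)
    (hint : IsIntersectingFamily ℱ) (hτ : coveringNumber ℱ = m)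
    (T : Submodule F V) (hT : finrank F ↥T = m - 1)
    (hbig : gaussBinom q (m - 1) 1 < ({G | G ∈ ℱ ∧ T ≤ G}.ncard : ℚ)) :
    finrank F ↥(sSup {G | G ∈ ℱ ∧ T ≤ G}) = 2 * m - 1 ∧
      ∀ A ∈ ℱ, finrank F ↥(A ⊓ T) = 0 →
        A ≤ sSup {G | G ∈ ℱ ∧ T ≤ G} ∧
          sSup {G | G ∈ ℱ ∧ T ≤ G} = T ⊔ A := by
  set 𝒢 := {G | G ∈ ℱ ∧ T ≤ G}
  have hcount : Nat.card F ^ (m - 1) - 1 < 𝒢.ncard * (Nat.card F - 1) := by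
    rw [Nat.card_eq_fintype_card, hq]
    exact pow_sub_one_lt_mul_of_gaussBinom_one_lt (hq ▸ Fintype.one_lt_card) hbig
  have h𝒢T : ∀ G ∈ 𝒢, T ≤ G := fun G hG => hG.2
  have h𝒢dim : ∀ G ∈ 𝒢, finrank F G ≤ finrank F T + 1 := fun G hG => by
    rw [hdim G hG.1, hT]; omega
  have hA_le (A : Submodule F V) (hA : A ∈ ℱ) (hTA : Disjoint T A) : A ≤ sSup 𝒢 :=
    Submodule.le_sSup_of_disjoint h𝒢T h𝒢dim (fun G hG => hint G hG.1 A hA) hTA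
      (by rwa [hdim A hA])
  have hY (A : Submodule F V) (hA : A ∈ ℱ) (hTA : Disjoint T A) : sSup 𝒢 = T ⊔ A :=
    Submodule.sSup_eq_sup_of_disjoint h𝒢T h𝒢dim (fun G hG => hint G hG.1 A hA) hTA
      (by rwa [hdim A hA])
  obtain ⟨A₀, hA₀, hTA₀⟩ : ∃ A ∈ ℱ, Disjoint T A :=
    exists_disjoint_of_finrank_lt_coveringNumber_s8 (by omega)
  refine ⟨?_, fun A hA h0 => ?_⟩
  · rw [hY A₀ hA₀ hTA₀, Submodule.finrank_sup_of_disjoint hTA₀, hT, hdim A₀ hA₀]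
    omega
  · have hTA : Disjoint T A := disjoint_iff.mpr (inf_comm A T ▸ Submodule.finrank_eq_zero.mp h0)
    exact ⟨hA_le A hA hTA, hY A hA hTA⟩

theorem stmt8 {F V : Type*} [Field F] [Fintype F] [AddCommGroup V] [Module F V]
    [FiniteDimensional F V] {q m n : ℕ} (hq : Fintype.card F = q)
    (hm : 2 ≤ m) (hV : finrank F V = n)
    (ℱ : Set (Submodule F V)) (hdim : ∀ A ∈ ℱ, finrank F ↥A = m)
    (hint : IsIntersectingFamily ℱ) (hτ : coveringNumber ℱ = m)
    (T : Submodule F V) (hT : finrank F ↥T = m - 1)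
    (hbig : gaussBinom q (m - 1) 1 < ({G | G ∈ ℱ ∧ T ≤ G}.ncard : ℚ)) :
    finrank F ↥(sSup {G | G ∈ ℱ ∧ T ≤ G}) = 2 * m - 1 ∧
      ∀ A ∈ ℱ, finrank F ↥(A ⊓ T) = 0 →
        A ≤ sSup {G | G ∈ ℱ ∧ T ≤ G} ∧
          sSup {G | G ∈ ℱ ∧ T ≤ G} = T ⊔ A :=
  stmt8_general hq hm ℱ hdim hint hτ T hT hbig
end

section
/- Let n > 0 and l ≥ 0 be integers, V an (n+l)-dimensional vector space over 𝔽_q, and W₁ a fixed l-dimensional subspace of V. Let m ≥ 2, 0 ≤ k ≤ m, m ≤ n if k = 0, and let X be a subspace of V of type (2m−1,t), where t = max{0, 2m−1−n} if k = 0 and t = m+k−1 if k ≥ 1 (so in particular k ≤ t ≤ l and 2m−1−t ≤ n). Then the family ℱ of all subspaces of type (m,k) contained in X is a nonempty intersecting family with covering number τ(ℱ) = m. -/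
open Module

/-!
Any two `m`-dimensional subspaces of the `(2m-1)`-dimensional `X` meet, and a member of the
family meets every other one, so `τ ≤ m`. For `τ ≥ m`, every subspace `W` of dimension `< m`
misses some member `S`, built greedily: first `S ⊓ W₁` inside `X ⊓ W₁` avoiding `W`, then `S`
inside `X`, one vector at a time, each chosen outside both `S ⊔ (X ⊓ W₁)` and `S ⊔ W` (a space is
never the union of two proper subspaces). The value of `t` is what makes both greedy steps fit
into the available dimensions.
-/

namespace Submodule

theorem exists_mem_notMem_notMem {R M : Type*} [Ring R] [AddCommGroup M] [Module R M]
    {X P Q : Submodule R M} (hP : P < X) (hQ : Q < X) : ∃ v ∈ X, v ∉ P ∧ v ∉ Q := by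
  obtain ⟨a, haX, haP⟩ := SetLike.exists_of_lt hP
  obtain ⟨b, hbX, hbQ⟩ := SetLike.exists_of_lt hQ
  by_cases haQ : a ∈ Q
  · by_cases hbP : b ∈ P
    · refine ⟨a + b, X.add_mem haX hbX, fun h ↦ haP ?_, fun h ↦ hbQ ?_⟩
      · exact (P.add_mem_iff_left hbP).mp h
      · exact (Q.add_mem_iff_right haQ).mp h
    · exact ⟨b, hbX, hbP, hbQ⟩
  · exact ⟨a, haX, haP, haQ⟩

variable {K V : Type*} [DivisionRing K] [AddCommGroup V] [Module K V] [FiniteDimensional K V]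

theorem sup_span_singleton_inf_eq {T Y : Submodule K V} {v : V} (hv : v ∉ T ⊔ Y) :
    (T ⊔ K ∙ v) ⊓ Y = T ⊓ Y := by
  have hvT : v ∉ T := fun h ↦ hv (mem_sup_left h)
  have h₁ := finrank_sup_add_finrank_inf_eq (T ⊔ K ∙ v) Y
  have h₂ := finrank_sup_add_finrank_inf_eq T Y
  rw [sup_right_comm, finrank_sup_span_singleton hv, finrank_sup_span_singleton hvT] at h₁
  exact (eq_of_le_of_finrank_eq (inf_le_inf_right Y le_sup_left) (by omega)).symm

/-- The dimension hypotheses say that neither `T ⊔ U` nor `T ⊔ W` is all of `X`, so `T` can be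
enlarged by a vector of `X` outside both. -/
theorem exists_finrank_eq_add_one_inf_eq {X T U W : Submodule K V}
    (hTX : T ≤ X) (hUX : U ≤ X) (hWX : W ≤ X)
    (hU : finrank K T + finrank K U < finrank K X + finrank K ↥(T ⊓ U))
    (hW : finrank K T + finrank K W < finrank K X + finrank K ↥(T ⊓ W)) :
    ∃ T' : Submodule K V, T ≤ T' ∧ T' ≤ X ∧ finrank K T' = finrank K T + 1 ∧
      T' ⊓ U = T ⊓ U ∧ T' ⊓ W = T ⊓ W := by
  have hTU := finrank_sup_add_finrank_inf_eq T U
  have hTW := finrank_sup_add_finrank_inf_eq T W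
  have hTUX : T ⊔ U < X := lt_of_le_of_ne (sup_le hTX hUX) fun h ↦ by rw [h] at hTU; omega
  have hTWX : T ⊔ W < X := lt_of_le_of_ne (sup_le hTX hWX) fun h ↦ by rw [h] at hTW; omega
  obtain ⟨v, hvX, hvU, hvW⟩ := exists_mem_notMem_notMem hTUX hTWX
  refine ⟨T ⊔ K ∙ v, le_sup_left, sup_le hTX ((span_singleton_le_iff_mem v X).mpr hvX),
    finrank_sup_span_singleton fun h ↦ hvU (mem_sup_left h),
    sup_span_singleton_inf_eq hvU, sup_span_singleton_inf_eq hvW⟩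

theorem exists_finrank_eq_inf_eq {X T U W : Submodule K V} {m : ℕ}
    (hTX : T ≤ X) (hUX : U ≤ X) (hWX : W ≤ X) (hTm : finrank K T ≤ m)
    (hU : finrank K U + m ≤ finrank K X + finrank K ↥(T ⊓ U))
    (hW : finrank K W + m ≤ finrank K X + finrank K ↥(T ⊓ W)) :
    ∃ S : Submodule K V, T ≤ S ∧ S ≤ X ∧ finrank K S = m ∧ S ⊓ U = T ⊓ U ∧ S ⊓ W = T ⊓ W := by
  obtain ⟨d, hd⟩ := Nat.exists_eq_add_of_le hTm
  induction d generalizing T with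
  | zero => exact ⟨T, le_rfl, hTX, hd.symm, rfl, rfl⟩
  | succ d ih =>
    obtain ⟨T', hTT', hT'X, hT'T, hT'U, hT'W⟩ :=
      exists_finrank_eq_add_one_inf_eq hTX hUX hWX (by omega) (by omega)
    obtain ⟨S, hT'S, hSX, hSm, hSU, hSW⟩ :=
      ih hT'X (by omega) (by rwa [hT'U]) (by rwa [hT'W]) (by omega)
    exact ⟨S, hTT'.trans hT'S, hSX, hSm, hSU.trans hT'U, hSW.trans hT'W⟩

end Submodule

open Submodule

section

variable {F V : Type*} [Field F] [AddCommGroup V] [Module F V]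

def subspacesOfType (X W₁ : Submodule F V) (m k : ℕ) : Set (Submodule F V) :=
  {S | S ≤ X ∧ finrank F S = m ∧ finrank F ↥(S ⊓ W₁) = k}

theorem isIntersectingFamily_of_forall_le [FiniteDimensional F V] {𝒜 : Set (Submodule F V)}
    {X : Submodule F V} {m : ℕ} (hX : finrank F X < 2 * m)
    (h𝒜 : ∀ A ∈ 𝒜, A ≤ X ∧ finrank F A = m) : IsIntersectingFamily 𝒜 := by
  intro A hA B hB
  obtain ⟨hAX, hAm⟩ := h𝒜 A hA
  obtain ⟨hBX, hBm⟩ := h𝒜 B hB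
  have := finrank_sup_add_finrank_inf_eq A B
  have := finrank_mono (sup_le hAX hBX)
  omega

theorem coveringNumber_eq_of_forall_exists_inf_eq_bot {𝒜 : Set (Submodule F V)}
    {A : Submodule F V} {m : ℕ} (hA : A ∈ 𝒜) (hAm : finrank F A = m) (h𝒜 : IsIntersectingFamily 𝒜)
    (havoid : ∀ W : Submodule F V, finrank F W < m → ∃ B ∈ 𝒜, W ⊓ B = ⊥) :
    coveringNumber 𝒜 = m := by
  refine le_antisymm (Nat.sInf_le ⟨A, hAm, h𝒜 A hA⟩) (le_csInf ⟨m, A, hAm, h𝒜 A hA⟩ ?_)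
  rintro d ⟨W, rfl, hW⟩
  by_contra! hWm
  obtain ⟨B, hB, hWB⟩ := havoid W hWm
  have := hW B hB
  rw [hWB, finrank_bot] at this
  omega

variable [FiniteDimensional F V]

/-- First choose the part `S ⊓ W₁` inside `X ⊓ W₁` avoiding `W`, then extend it inside `X`
without enlarging its intersections with `X ⊓ W₁` and with `W`. -/
theorem exists_mem_subspacesOfType_inf_eq_bot_of_le {X W₁ W : Submodule F V} {m k : ℕ}
    (hWX : W ≤ X) (hkm : k ≤ m) (hXW₁ : finrank F ↥(X ⊓ W₁) + m ≤ finrank F X + k)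
    (hW : finrank F W + m ≤ finrank F X)
    (hXW₁W : finrank F ↥(X ⊓ W₁ ⊓ W) + k ≤ finrank F ↥(X ⊓ W₁)) :
    ∃ S ∈ subspacesOfType X W₁ m k, S ⊓ W = ⊥ := by
  obtain ⟨T, -, hT, hTk, -, hTW⟩ := exists_finrank_eq_inf_eq (X := X ⊓ W₁) (T := ⊥)
    (U := X ⊓ W₁ ⊓ W) (W := X ⊓ W₁ ⊓ W) (m := k) bot_le inf_le_left inf_le_left
    (by simp) (by rwa [bot_inf_eq, finrank_bot, add_zero])
    (by rwa [bot_inf_eq, finrank_bot, add_zero])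
  have hTW₁ : T ⊓ (X ⊓ W₁) = T := inf_eq_left.mpr hT
  replace hTW : T ⊓ W = ⊥ := by rw [← hTW₁, inf_assoc, hTW, bot_inf_eq]
  obtain ⟨S, -, hSX, hSm, hSW₁, hSW⟩ := exists_finrank_eq_inf_eq (U := X ⊓ W₁) (W := W) (m := m)
    (hT.trans inf_le_left) inf_le_left hWX (by omega) (by rwa [hTW₁, hTk])
    (by rwa [hTW, finrank_bot, add_zero])
  refine ⟨S, ⟨hSX, hSm, ?_⟩, hSW.trans hTW⟩
  rw [← inf_eq_left.mpr hSX, inf_assoc, hSW₁, hTW₁, hTk]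

theorem exists_mem_subspacesOfType_inf_eq_bot {X W₁ W : Submodule F V} {m k : ℕ}
    (hkm : k ≤ m) (hXW₁ : finrank F ↥(X ⊓ W₁) + m ≤ finrank F X + k)
    (hX : 2 * m ≤ finrank F X + 1) (hk : k = 0 ∨ m + k ≤ finrank F ↥(X ⊓ W₁) + 1)
    (hWm : finrank F W < m) :
    ∃ S ∈ subspacesOfType X W₁ m k, W ⊓ S = ⊥ := by
  have : finrank F ↥(W ⊓ X) ≤ finrank F W := finrank_mono inf_le_left
  have : finrank F ↥(X ⊓ W₁ ⊓ (W ⊓ X)) ≤ finrank F ↥(W ⊓ X) := finrank_mono inf_le_right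
  have : finrank F ↥(X ⊓ W₁ ⊓ (W ⊓ X)) ≤ finrank F ↥(X ⊓ W₁) := finrank_mono inf_le_left
  obtain ⟨S, hS, hSW⟩ := exists_mem_subspacesOfType_inf_eq_bot_of_le (W := W ⊓ X) inf_le_right
    hkm hXW₁ (by omega) (by omega)
  refine ⟨S, hS, ?_⟩
  rwa [inf_comm, ← inf_eq_left.mpr hS.1, inf_assoc, inf_comm X]

end

theorem stmt18_general {F V : Type*} [Field F] [AddCommGroup V] [Module F V]
    [FiniteDimensional F V] {n m k t : ℕ}
    (W₁ : Submodule F V)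
    (hm : 2 ≤ m) (hkm : k ≤ m) (hk0 : k = 0 → m ≤ n)
    (ht : t = if k = 0 then 2 * m - 1 - n else m + k - 1)
    (X : Submodule F V) (hX : finrank F ↥X = 2 * m - 1)
    (hXt : finrank F ↥(X ⊓ W₁) = t) :
    {S : Submodule F V | S ≤ X ∧ finrank F ↥S = m ∧
        finrank F ↥(S ⊓ W₁) = k}.Nonempty ∧
      IsIntersectingFamily {S : Submodule F V | S ≤ X ∧ finrank F ↥S = m ∧
        finrank F ↥(S ⊓ W₁) = k} ∧
      coveringNumber {S : Submodule F V | S ≤ X ∧ finrank F ↥S = m ∧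
        finrank F ↥(S ⊓ W₁) = k} = m := by
  change (subspacesOfType X W₁ m k).Nonempty ∧ IsIntersectingFamily (subspacesOfType X W₁ m k) ∧
    coveringNumber (subspacesOfType X W₁ m k) = m
  have hXW₁ : finrank F ↥(X ⊓ W₁) + m ≤ finrank F X + k := by
    split_ifs at ht with hk
    · have := hk0 hk
      omega
    · omega
  have hk : k = 0 ∨ m + k ≤ finrank F ↥(X ⊓ W₁) + 1 := by
    split_ifs at ht with hk <;> omega
  have havoid (W : Submodule F V) (hW : finrank F W < m) :=
    exists_mem_subspacesOfType_inf_eq_bot hkm hXW₁ (by omega) hk hW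
  obtain ⟨S, hS, -⟩ := havoid ⊥ (by rw [finrank_bot]; omega)
  have hint : IsIntersectingFamily (subspacesOfType X W₁ m k) :=
    isIntersectingFamily_of_forall_le (X := X) (by omega) fun A hA ↦ ⟨hA.1, hA.2.1⟩
  exact ⟨⟨S, hS⟩, hint, coveringNumber_eq_of_forall_exists_inf_eq_bot hS hS.2.1 hint havoid⟩

theorem stmt18 {F V : Type*} [Field F] [Fintype F] [AddCommGroup V] [Module F V]
    [FiniteDimensional F V] {n l m k t : ℕ}
    (hn : 0 < n) (hV : finrank F V = n + l)
    (W₁ : Submodule F V) (hW₁ : finrank F ↥W₁ = l)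
    (hm : 2 ≤ m) (hkm : k ≤ m) (hk0 : k = 0 → m ≤ n)
    (ht : t = if k = 0 then 2 * m - 1 - n else m + k - 1)
    (hkt : k ≤ t) (htl : t ≤ l) (htn : 2 * m - 1 - t ≤ n)
    (X : Submodule F V) (hX : finrank F ↥X = 2 * m - 1)
    (hXt : finrank F ↥(X ⊓ W₁) = t) :
    {S : Submodule F V | S ≤ X ∧ finrank F ↥S = m ∧
        finrank F ↥(S ⊓ W₁) = k}.Nonempty ∧
      IsIntersectingFamily {S : Submodule F V | S ≤ X ∧ finrank F ↥S = m ∧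
        finrank F ↥(S ⊓ W₁) = k} ∧
      coveringNumber {S : Submodule F V | S ≤ X ∧ finrank F ↥S = m ∧
        finrank F ↥(S ⊓ W₁) = k} = m :=
  stmt18_general W₁ hm hkm hk0 ht X hX hXt
end
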